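/- Let (Q,a) be a finite quiver without vertex loops with an admissible automorphism a. For all α, β ∈ (ℤ𝓘)^⟨a⟩: (1) (α,β)_Q = (f(α),f(β))_Γ; (2) setting s_𝐢 := ∏_{i ∈ 𝐢} r_i ∈ W(Q) (a well-defined element, since the reflections r_i for vertices i in a single ⟨a⟩-orbit pairwise commute by admissibility), one has f(s_𝐢(α)) = r_𝐢(f(α)) in ℤ𝐈. -/

import Mathlib

noncomputable section
open scoped Classical

/-- A finite quiver without vertex loops. -/
structure FinQuiver where
  V : Type
  A : Type
  [finV : Fintype V]
  [finA : Fintype A]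
  s : A → V
  t : A → V
  no_loop : ∀ ρ, s ρ ≠ t ρ

attribute [instance] FinQuiver.finV FinQuiver.finA

/-- An automorphism of a quiver. -/
structure QuiverAut (Q : FinQuiver) where
  vmap : Q.V ≃ Q.V
  amap : Q.A ≃ Q.A
  hs : ∀ ρ, Q.s (amap ρ) = vmap (Q.s ρ)
  ht : ∀ ρ, Q.t (amap ρ) = vmap (Q.t ρ)

namespace QuiverAut

variable {Q : FinQuiver} (σ : QuiverAut Q)

/-- Two vertices lie in the same `⟨a⟩`-orbit. -/
def SameOrbit (i j : Q.V) : Prop := ∃ n : ℤ, ((σ.vmap : Equiv.Perm Q.V) ^ n) i = j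

theorem sameOrbit_equivalence : Equivalence σ.SameOrbit := by
  constructor
  · intro i; exact ⟨0, rfl⟩
  · rintro i j ⟨n, rfl⟩
    exact ⟨-n, by rw [← Equiv.Perm.mul_apply, ← zpow_add]; simp⟩
  · rintro i j l ⟨n, rfl⟩ ⟨m, rfl⟩
    exact ⟨m + n, by rw [← Equiv.Perm.mul_apply, ← zpow_add]⟩

/-- The setoid of `⟨a⟩`-orbits of vertices. -/
def orbSetoid : Setoid Q.V := ⟨σ.SameOrbit, σ.sameOrbit_equivalence⟩

/-- The set `𝐈` of `⟨a⟩`-orbits of vertices. -/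
def Orb := Quotient σ.orbSetoid

instance : Finite σ.Orb := Quotient.finite _
instance : Fintype σ.Orb := Fintype.ofFinite _

/-- The orbit of a vertex. -/
def orbOf (i : Q.V) : σ.Orb := Quotient.mk σ.orbSetoid i

/-- `a` is admissible if no arrow joins two vertices in the same orbit. -/
def Admissible : Prop := ∀ ρ : Q.A, ¬ σ.SameOrbit (Q.s ρ) (Q.t ρ)

/-- `d oi` is the number of vertices in the orbit `oi`. -/
def d (oi : σ.Orb) : ℕ := (Finset.univ.filter fun i : Q.V => σ.orbOf i = oi).card

/-- The number of edges of `Q` between two distinct orbits. -/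
def e (oi oj : σ.Orb) : ℕ :=
  (Finset.univ.filter fun ρ : Q.A =>
    (σ.orbOf (Q.s ρ) = oi ∧ σ.orbOf (Q.t ρ) = oj) ∨
    (σ.orbOf (Q.s ρ) = oj ∧ σ.orbOf (Q.t ρ) = oi)).card

/-- The symmetric matrix `B` associated to `(Q,a)`. -/
def B (oi oj : σ.Orb) : ℤ := if oi = oj then 2 * σ.d oi else -(σ.e oi oj : ℤ)

/-- The symmetric bilinear form `(−,−)_Γ` on `ℤ𝐈` determined by `B`. -/
def formG (α β : σ.Orb → ℤ) : ℤ := ∑ oi, ∑ oj, σ.B oi oj * α oi * β oj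

/-- The order of the automorphism: `n` is the exact period of `a`. -/
def IsOrder (n : ℕ) : Prop :=
  0 < n ∧ (∀ i, σ.vmap^[n] i = i) ∧ (∀ ρ, σ.amap^[n] ρ = ρ) ∧
    ∀ m, 0 < m → ((∀ i, σ.vmap^[m] i = i) ∧ (∀ ρ, σ.amap^[m] ρ = ρ)) → n ∣ m

/-- The action of `a` on the root lattice `ℤ𝓘`. -/
def act (α : Q.V → ℤ) : Q.V → ℤ := fun i => α (σ.vmap.symm i)

/-- The action of `a` on the root lattice, as a permutation of the lattice. -/
def latPerm : Equiv.Perm (Q.V → ℤ) where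
  toFun α := fun i => α (σ.vmap.symm i)
  invFun α := fun i => α (σ.vmap i)
  left_inv α := by funext i; simp
  right_inv α := by funext i; simp

/-- `α ∈ (ℤ𝓘)^⟨a⟩`, i.e. `α` is fixed by `a`. -/
def IsFixed (α : Q.V → ℤ) : Prop := ∀ i, α (σ.vmap i) = α i

/-- The canonical bijection `f : (ℤ𝓘)^⟨a⟩ → ℤ𝐈`, evaluated using a choice of
representative vertex in each orbit. -/
def fmap (α : Q.V → ℤ) : σ.Orb → ℤ := fun oi => α oi.out

end QuiverAut

/-- The standard basis vector (simple root) at an index. -/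
def eVec {ι : Type} [DecidableEq ι] (i : ι) : ι → ℤ := fun j => if j = i then 1 else 0

namespace FinQuiver

variable (Q : FinQuiver)

/-- The number of edges between two vertices of `Q`. -/
def eQ (i j : Q.V) : ℕ :=
  (Finset.univ.filter fun ρ : Q.A =>
    (Q.s ρ = i ∧ Q.t ρ = j) ∨ (Q.s ρ = j ∧ Q.t ρ = i)).card

/-- The symmetric generalised Cartan matrix of `Q`. -/
def AQ (i j : Q.V) : ℤ := if i = j then 2 else -(Q.eQ i j : ℤ)

/-- The symmetric bilinear form `(−,−)_Q` on `ℤ𝓘`. -/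
def formQ (α β : Q.V → ℤ) : ℤ := ∑ i, ∑ j, Q.AQ i j * α i * β j

/-- The simple reflection `r_i` on `ℤ𝓘`. -/
def reflQ (i : Q.V) (α : Q.V → ℤ) : Q.V → ℤ :=
  fun j => α j - Q.formQ α (eVec i) * eVec i j

theorem reflQ_involutive (i : Q.V) : Function.Involutive (Q.reflQ i) := by
  have he : Q.formQ (eVec i) (eVec i) = 2 := by
    simp [formQ, eVec, mul_ite, ite_mul, mul_one, mul_zero, zero_mul, one_mul,
      Finset.sum_ite_eq', AQ]
  have hlin : ∀ (c : ℤ) (α : Q.V → ℤ), Q.formQ (fun j => α j - c * eVec i j) (eVec i)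
      = Q.formQ α (eVec i) - c * Q.formQ (eVec i) (eVec i) := by
    intro c α
    have h : ∀ u v : Q.V, Q.AQ u v * (α u - c * eVec i u) * eVec i v
        = Q.AQ u v * α u * eVec i v - c * (Q.AQ u v * eVec i u * eVec i v) := by
      intro u v; ring
    simp only [formQ, h, Finset.sum_sub_distrib, ← Finset.mul_sum]
  intro α
  funext j
  simp only [reflQ]
  rw [show Q.reflQ i α = fun j => α j - Q.formQ α (eVec i) * eVec i j from rfl, hlin, he]
  ring

/-- The simple reflection `r_i`, as a permutation of the root lattice. -/
def reflQPerm (i : Q.V) : Equiv.Perm (Q.V → ℤ) := (Q.reflQ_involutive i).toPerm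

/-- The Weyl group `W(Q)`, as a subgroup of the permutations of the root lattice. -/
def weylQ : Subgroup (Equiv.Perm (Q.V → ℤ)) := Subgroup.closure (Set.range Q.reflQPerm)

/-- A vector is positive if it is non-zero with non-negative entries. -/
def PosVec {ι : Type} (α : ι → ℤ) : Prop := α ≠ 0 ∧ ∀ i, 0 ≤ α i

/-- Adjacency of vertices in the underlying graph of `Q`. -/
def adjQ (i j : Q.V) : Prop := ∃ ρ, (Q.s ρ = i ∧ Q.t ρ = j) ∨ (Q.s ρ = j ∧ Q.t ρ = i)

/-- The support of `α` is connected. -/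
def SuppConnQ (α : Q.V → ℤ) : Prop :=
  ∀ i j, α i ≠ 0 → α j ≠ 0 →
    Relation.ReflTransGen (fun u v => Q.adjQ u v ∧ α u ≠ 0 ∧ α v ≠ 0) i j

/-- The fundamental region for `Q`. -/
def fundQ : Set (Q.V → ℤ) :=
  {α | PosVec α ∧ (∀ i, Q.formQ α (eVec i) ≤ 0) ∧ Q.SuppConnQ α}

/-- The real roots of `Q`. -/
def realRootsQ : Set (Q.V → ℤ) :=
  {α | ∃ w ∈ Q.weylQ, ∃ i, α = w (eVec i)}

/-- The imaginary roots of `Q`. -/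
def imRootsQ : Set (Q.V → ℤ) :=
  {α | ∃ w ∈ Q.weylQ, ∃ β ∈ Q.fundQ, α = w β ∨ α = -(w β)}

/-- The root system `Δ(Q)`. -/
def rootsQ : Set (Q.V → ℤ) := Q.realRootsQ ∪ Q.imRootsQ

/-- The positive roots `Δ(Q)_+`. -/
def posRootsQ : Set (Q.V → ℤ) := {α ∈ Q.rootsQ | PosVec α}

end FinQuiver

namespace QuiverAut

variable {Q : FinQuiver} (σ : QuiverAut Q)

/-- The simple reflection `r_oi` on `ℤ𝐈` for the valued graph `Γ`. -/
def reflG (oi : σ.Orb) (α : σ.Orb → ℤ) : σ.Orb → ℤ :=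
  fun oj => α oj - (σ.formG α (eVec oi) / (σ.d oi : ℤ)) * eVec oi oj

theorem d_pos (oi : σ.Orb) : 0 < σ.d oi := by
  refine Finset.card_pos.mpr ⟨oi.out, ?_⟩
  exact Finset.mem_filter.mpr ⟨Finset.mem_univ _, Quotient.out_eq oi⟩

theorem reflG_involutive (oi : σ.Orb) : Function.Involutive (σ.reflG oi) := by
  have hd : (0 : ℤ) < (σ.d oi : ℤ) := by exact_mod_cast σ.d_pos oi
  have he : σ.formG (eVec oi) (eVec oi) = 2 * (σ.d oi : ℤ) := by
    simp [formG, eVec, mul_ite, ite_mul, mul_one, mul_zero, zero_mul, one_mul,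
      Finset.sum_ite_eq', B]
  have hlin : ∀ (c : ℤ) (α : σ.Orb → ℤ), σ.formG (fun j => α j - c * eVec oi j) (eVec oi)
      = σ.formG α (eVec oi) - c * σ.formG (eVec oi) (eVec oi) := by
    intro c α
    have h : ∀ u v : σ.Orb, σ.B u v * (α u - c * eVec oi u) * eVec oi v
        = σ.B u v * α u * eVec oi v - c * (σ.B u v * eVec oi u * eVec oi v) := by
      intro u v; ring
    simp only [formG, h, Finset.sum_sub_distrib, ← Finset.mul_sum]
  have hdiv : ∀ x : ℤ, (x - x / (σ.d oi : ℤ) * (2 * (σ.d oi : ℤ))) / (σ.d oi : ℤ)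
      = -(x / (σ.d oi : ℤ)) := by
    intro x
    set D : ℤ := (σ.d oi : ℤ)
    have h := Int.mul_ediv_add_emod x D
    have h2 : x - x / D * (2 * D) = x % D + -(x / D) * D := by linarith
    rw [h2, Int.add_mul_ediv_right _ _ hd.ne',
      Int.ediv_eq_zero_of_lt (Int.emod_nonneg x hd.ne') (Int.emod_lt_of_pos x hd)]
    ring
  intro α
  funext j
  simp only [reflG]
  rw [show σ.reflG oi α = fun j => α j - σ.formG α (eVec oi) / (σ.d oi : ℤ) * eVec oi j
      from rfl, hlin, he, hdiv]
  ring

/-- The simple reflection `r_oi`, as a permutation of `ℤ𝐈`. -/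
def reflGPerm (oi : σ.Orb) : Equiv.Perm (σ.Orb → ℤ) := (σ.reflG_involutive oi).toPerm

/-- The Weyl group `W(Γ)`. -/
def weylG : Subgroup (Equiv.Perm (σ.Orb → ℤ)) := Subgroup.closure (Set.range σ.reflGPerm)

/-- Adjacency of orbits in the valued graph `Γ`. -/
def adjG (oi oj : σ.Orb) : Prop := oi ≠ oj ∧ σ.e oi oj ≠ 0

/-- Connectivity of the support, for the valued graph `Γ`. -/
def SuppConnG (α : σ.Orb → ℤ) : Prop :=
  ∀ oi oj, α oi ≠ 0 → α oj ≠ 0 →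
    Relation.ReflTransGen (fun u v => σ.adjG u v ∧ α u ≠ 0 ∧ α v ≠ 0) oi oj

/-- The fundamental region for `Γ`. -/
def fundG : Set (σ.Orb → ℤ) :=
  {α | FinQuiver.PosVec α ∧ (∀ oi, σ.formG α (eVec oi) ≤ 0) ∧ σ.SuppConnG α}

/-- The real roots of `Γ`. -/
def realRootsG : Set (σ.Orb → ℤ) := {α | ∃ w ∈ σ.weylG, ∃ oi, α = w (eVec oi)}

/-- The imaginary roots of `Γ`. -/
def imRootsG : Set (σ.Orb → ℤ) :=
  {α | ∃ w ∈ σ.weylG, ∃ β ∈ σ.fundG, α = w β ∨ α = -(w β)}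

/-- The root system `Δ(Γ)`. -/
def rootsG : Set (σ.Orb → ℤ) := σ.realRootsG ∪ σ.imRootsG

/-- The positive roots `Δ(Γ)_+`. -/
def posRootsG : Set (σ.Orb → ℤ) := {α ∈ σ.rootsG | FinQuiver.PosVec α}

end QuiverAut

/-- A representation of a quiver `Q` over a field `k`. -/
structure QRep (k : Type) [Field k] (Q : FinQuiver) where
  M : Q.V → Type
  [acg : ∀ i, AddCommGroup (M i)]
  [mod : ∀ i, Module k (M i)]
  [fd : ∀ i, FiniteDimensional k (M i)]
  f : ∀ ρ : Q.A, M (Q.s ρ) →ₗ[k] M (Q.t ρ)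

attribute [instance] QRep.acg QRep.mod QRep.fd

namespace QRep

variable {k : Type} [Field k] {Q : FinQuiver}

/-- Isomorphism of representations. -/
def Iso (X Y : QRep k Q) : Prop :=
  ∃ e : ∀ i, X.M i ≃ₗ[k] Y.M i,
    ∀ ρ x, e (Q.t ρ) (X.f ρ x) = Y.f ρ (e (Q.s ρ) x)

/-- The direct sum of two representations. -/
def dsum (X Y : QRep k Q) : QRep k Q where
  M i := X.M i × Y.M i
  f ρ := (X.f ρ).prodMap (Y.f ρ)

/-- The zero representation. -/
def zero (k : Type) [Field k] (Q : FinQuiver) : QRep k Q where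
  M _ := PUnit
  f _ := 0

/-- The direct sum of a list of representations. -/
def dsumList (l : List (QRep k Q)) : QRep k Q := l.foldr dsum (zero k Q)

/-- A representation is zero if all its vector spaces are zero. -/
def IsZero (X : QRep k Q) : Prop := ∀ i, ∀ x : X.M i, x = 0

/-- An indecomposable representation. -/
def Indec (X : QRep k Q) : Prop :=
  ¬ X.IsZero ∧ ∀ Y Z : QRep k Q, X.Iso (Y.dsum Z) → Y.IsZero ∨ Z.IsZero

/-- `X` is isomorphic to a direct sum of exactly `m` indecomposable representations. -/
def HasIndecSummands (X : QRep k Q) (m : ℕ) : Prop :=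
  ∃ l : List (QRep k Q), l.length = m ∧ (∀ Y ∈ l, Y.Indec) ∧ X.Iso (dsumList l)

/-- The dimension vector of a representation. -/
def dim (X : QRep k Q) : Q.V → ℤ := fun i => (Module.finrank k (X.M i) : ℤ)

/-- The twist `^aX` of a representation by a quiver automorphism. -/
def twist (σ : QuiverAut Q) (X : QRep k Q) : QRep k Q where
  M i := X.M (σ.vmap.symm i)
  f ρ := by
    have h1 : Q.s ρ = σ.vmap (Q.s (σ.amap.symm ρ)) := by
      have h := σ.hs (σ.amap.symm ρ); simpa using h
    have h2 : Q.t ρ = σ.vmap (Q.t (σ.amap.symm ρ)) := by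
      have h := σ.ht (σ.amap.symm ρ); simpa using h
    have hs : σ.vmap.symm (Q.s ρ) = Q.s (σ.amap.symm ρ) := by rw [h1]; simp
    have ht : σ.vmap.symm (Q.t ρ) = Q.t (σ.amap.symm ρ) := by rw [h2]; simp
    show X.M (σ.vmap.symm (Q.s ρ)) →ₗ[k] X.M (σ.vmap.symm (Q.t ρ))
    rw [hs, ht]
    exact X.f (σ.amap.symm ρ)

/-- An isomorphically invariant representation: `^aX ≅ X`. -/
def IsII (σ : QuiverAut Q) (X : QRep k Q) : Prop := (X.twist σ).Iso X

/-- An isomorphically invariant indecomposable (ii-indecomposable): an ii-representation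
which is not isomorphic to the direct sum of two non-zero ii-representations. -/
def IsIIIndec (σ : QuiverAut Q) (X : QRep k Q) : Prop :=
  X.IsII σ ∧ ¬ X.IsZero ∧
    ∀ Y Z : QRep k Q, Y.IsII σ → Z.IsII σ → X.Iso (Y.dsum Z) → Y.IsZero ∨ Z.IsZero

end QRep

/-!
Both forms are a diagonal term minus a sum over arrows:
`(α, β)_Q = 2 ∑ᵢ αᵢ βᵢ - ∑_ρ (α_{sρ} β_{tρ} + α_{tρ} β_{sρ})`, and `(x, y)_Γ` is the same
expression with diagonal weights `2 d_𝐢` and with every arrow replaced by the pair of orbits of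
its endpoints; admissibility says that no arrow becomes a loop there. For `a`-fixed vectors the
two expressions agree term by term, which gives (1).

For (2), admissibility makes the simple roots of one orbit pairwise orthogonal, so
`s_𝐢 α = α - ∑_{i ∈ 𝐢} (α, e_i)_Q e_i`. For fixed `α` the coefficient `(α, e_i)_Q` does not depend
on `i ∈ 𝐢`, and applying (1) to the indicator vector of `𝐢` identifies `d_𝐢` times it with
`(f α, e_𝐢)_Γ`.
-/

-- `Q.eQ` is `edgeCount Q.s Q.t` and `σ.e` is `edgeCount` of the endpoint orbits, definitionally.
def edgeCount {ι A : Type} [Fintype A] (s t : A → ι) (i j : ι) : ℕ :=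
  (Finset.univ.filter fun ρ : A => (s ρ = i ∧ t ρ = j) ∨ (s ρ = j ∧ t ρ = i)).card

section EdgeCount

variable {ι A : Type} [Fintype A] {s t : A → ι}

theorem edgeCount_self (hst : ∀ ρ, s ρ ≠ t ρ) (i : ι) : edgeCount s t i i = 0 := by
  simp only [edgeCount, or_self, Finset.card_eq_zero, Finset.filter_eq_empty_iff]
  rintro ρ - ⟨hs, ht⟩
  exact hst ρ (hs.trans ht.symm)

variable [Fintype ι]

theorem sum_sum_card_filter_mul (u v : A → ι) (x y : ι → ℤ) :
    ∑ i, ∑ j, ((Finset.univ.filter fun ρ => u ρ = i ∧ v ρ = j).card : ℤ) * x i * y j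
      = ∑ ρ, x (u ρ) * y (v ρ) := by
  simp only [Finset.card_filter, Nat.cast_sum, Nat.cast_ite, Nat.cast_one, Nat.cast_zero,
    Finset.sum_mul, ite_mul, one_mul, zero_mul, ite_and]
  rw [Finset.sum_congr rfl fun i _ => Finset.sum_comm, Finset.sum_comm]
  simp

theorem sum_sum_edgeCount_mul (hst : ∀ ρ, s ρ ≠ t ρ) (x y : ι → ℤ) :
    ∑ i, ∑ j, (edgeCount s t i j : ℤ) * x i * y j
      = ∑ ρ, (x (s ρ) * y (t ρ) + x (t ρ) * y (s ρ)) := by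
  have hcount : ∀ i j, (edgeCount s t i j : ℤ)
      = (Finset.univ.filter fun ρ => s ρ = i ∧ t ρ = j).card
        + (Finset.univ.filter fun ρ => t ρ = i ∧ s ρ = j).card := by
    intro i j
    simp only [edgeCount, Finset.filter_or, and_comm (a := s _ = j)]
    rw [Finset.card_union_of_disjoint, Nat.cast_add]
    exact Finset.disjoint_filter.2 fun ρ _ h₁ h₂ => hst ρ (h₁.1.trans h₂.1.symm)
  simp only [hcount, add_mul, Finset.sum_add_distrib, sum_sum_card_filter_mul]

theorem sum_sum_ite_edgeCount_mul [DecidableEq ι] (hst : ∀ ρ, s ρ ≠ t ρ) (w x y : ι → ℤ) :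
    ∑ i, ∑ j, (if i = j then w i else -(edgeCount s t i j : ℤ)) * x i * y j
      = ∑ i, w i * x i * y i - ∑ ρ, (x (s ρ) * y (t ρ) + x (t ρ) * y (s ρ)) := by
  have hsplit : ∀ i j, (if i = j then w i else -(edgeCount s t i j : ℤ))
      = (if i = j then w i else 0) - edgeCount s t i j := by
    intro i j
    split_ifs with h
    · simp [h, edgeCount_self hst]
    · ring
  simp only [hsplit, sub_mul, Finset.sum_sub_distrib, ite_mul, zero_mul, Finset.sum_ite_eq,
    Finset.mem_univ, if_true, sum_sum_edgeCount_mul hst]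

end EdgeCount

namespace FinQuiver

variable (Q : FinQuiver)

theorem formQ_eq_sum_arrows (α β : Q.V → ℤ) :
    Q.formQ α β = ∑ i, 2 * α i * β i - ∑ ρ, (α (Q.s ρ) * β (Q.t ρ) + α (Q.t ρ) * β (Q.s ρ)) :=
  sum_sum_ite_edgeCount_mul Q.no_loop (fun _ => 2) α β

theorem AQ_comm (i j : Q.V) : Q.AQ i j = Q.AQ j i := by
  simp only [AQ, eq_comm (a := i), eQ, or_comm]

theorem formQ_eVec_right (α : Q.V → ℤ) (j : Q.V) : Q.formQ α (eVec j) = ∑ i, Q.AQ i j * α i := by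
  simp [formQ, eVec, mul_comm]

theorem formQ_eq_sum_mul_formQ_eVec (α β : Q.V → ℤ) :
    Q.formQ α β = ∑ j, β j * Q.formQ α (eVec j) := by
  simp only [formQ_eVec_right, Finset.mul_sum]
  rw [formQ, Finset.sum_comm]
  exact Finset.sum_congr rfl fun j _ => Finset.sum_congr rfl fun i _ => by ring

theorem foldr_reflQ_of_pairwise {l : List Q.V} (hl : l.Pairwise fun u v => Q.AQ u v = 0)
    (α : Q.V → ℤ) :
    l.foldr Q.reflQ α = fun j => α j - if j ∈ l then Q.formQ α (eVec j) else 0 := by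
  induction l with
  | nil => simp
  | cons i l ih =>
    obtain ⟨hi, hl⟩ := List.pairwise_cons.1 hl
    have hil : i ∉ l := fun h => by simpa [AQ] using hi i h
    have hcoroot : Q.formQ (fun j => α j - if j ∈ l then Q.formQ α (eVec j) else 0) (eVec i)
        = Q.formQ α (eVec i) := by
      simp only [formQ_eVec_right]
      refine Finset.sum_congr rfl fun u _ => ?_
      split_ifs with hu
      · rw [Q.AQ_comm, hi u hu]; ring
      · ring
    funext j
    rw [List.foldr_cons, ih hl, reflQ, hcoroot]
    by_cases hj : j = i
    · subst hj; simp [eVec, hil]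
    · simp [eVec, hj]

end FinQuiver

namespace QuiverAut

variable {Q : FinQuiver} (σ : QuiverAut Q)

theorem orbOf_eq_orbOf {i j : Q.V} : σ.orbOf i = σ.orbOf j ↔ σ.SameOrbit i j := Quotient.eq

theorem orbOf_out (oi : σ.Orb) : σ.orbOf oi.out = oi := Quotient.out_eq oi

theorem orbOf_vmap (i : Q.V) : σ.orbOf (σ.vmap i) = σ.orbOf i :=
  σ.orbOf_eq_orbOf.2 ⟨-1, by simp⟩

theorem apply_eq_of_sameOrbit {β : Type*} {g : Q.V → β} (hg : ∀ i, g (σ.vmap i) = g i)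
    {i j : Q.V} (h : σ.SameOrbit i j) : g i = g j := by
  obtain ⟨n, rfl⟩ := h
  induction n using Int.induction_on generalizing i with
  | zero => rfl
  | succ n ih => rw [zpow_add_one, Equiv.Perm.mul_apply, ← ih, hg]
  | pred n ih =>
    rw [sub_eq_add_neg, zpow_add, Equiv.Perm.mul_apply, ← ih, zpow_neg_one, Equiv.Perm.inv_def]
    simpa using hg (σ.vmap.symm i)

theorem fmap_orbOf {α : Q.V → ℤ} (hα : σ.IsFixed α) (i : Q.V) : σ.fmap α (σ.orbOf i) = α i :=
  σ.apply_eq_of_sameOrbit hα (σ.orbOf_eq_orbOf.1 (σ.orbOf_out _))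

theorem sum_comp_orbOf (F : σ.Orb → ℤ) : ∑ i, F (σ.orbOf i) = ∑ oi, (σ.d oi : ℤ) * F oi := by
  rw [← Finset.sum_fiberwise Finset.univ σ.orbOf]
  refine Finset.sum_congr rfl fun oi _ => ?_
  rw [Finset.sum_congr rfl fun i hi => congrArg F (Finset.mem_filter.1 hi).2, Finset.sum_const,
    nsmul_eq_mul]
  rfl

theorem formG_eq_sum_arrows (hadm : σ.Admissible) (x y : σ.Orb → ℤ) :
    σ.formG x y = ∑ oi, 2 * (σ.d oi : ℤ) * x oi * y oi -
      ∑ ρ, (x (σ.orbOf (Q.s ρ)) * y (σ.orbOf (Q.t ρ))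
        + x (σ.orbOf (Q.t ρ)) * y (σ.orbOf (Q.s ρ))) :=
  sum_sum_ite_edgeCount_mul (fun ρ h => hadm ρ (σ.orbOf_eq_orbOf.1 h))
    (fun oi => 2 * (σ.d oi : ℤ)) x y

theorem formQ_eq_formG_fmap (hadm : σ.Admissible) {α β : Q.V → ℤ} (hα : σ.IsFixed α)
    (hβ : σ.IsFixed β) : Q.formQ α β = σ.formG (σ.fmap α) (σ.fmap β) := by
  rw [Q.formQ_eq_sum_arrows, σ.formG_eq_sum_arrows hadm]
  simp only [σ.fmap_orbOf hα, σ.fmap_orbOf hβ]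
  congr 1
  calc ∑ i, 2 * α i * β i = ∑ i, 2 * σ.fmap α (σ.orbOf i) * σ.fmap β (σ.orbOf i) := by
        simp only [σ.fmap_orbOf hα, σ.fmap_orbOf hβ]
    _ = ∑ oi, (σ.d oi : ℤ) * (2 * σ.fmap α oi * σ.fmap β oi) :=
        σ.sum_comp_orbOf fun oi => 2 * σ.fmap α oi * σ.fmap β oi
    _ = _ := Finset.sum_congr rfl fun oi _ => by ring

theorem formQ_comp_vmap (α β : Q.V → ℤ) :
    Q.formQ (α ∘ σ.vmap) (β ∘ σ.vmap) = Q.formQ α β := by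
  simp only [Q.formQ_eq_sum_arrows, Function.comp_apply, ← σ.hs, ← σ.ht]
  rw [Equiv.sum_comp σ.vmap fun i => 2 * α i * β i,
    Equiv.sum_comp σ.amap fun ρ => α (Q.s ρ) * β (Q.t ρ) + α (Q.t ρ) * β (Q.s ρ)]

theorem formQ_eVec_vmap {α : Q.V → ℤ} (hα : σ.IsFixed α) (j : Q.V) :
    Q.formQ α (eVec (σ.vmap j)) = Q.formQ α (eVec j) := by
  have hαv : α ∘ σ.vmap = α := funext hα
  have hev : eVec (σ.vmap j) ∘ σ.vmap = eVec j := funext fun k => by simp [eVec]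
  rw [← σ.formQ_comp_vmap, hαv, hev]

theorem formQ_eVec_out_orbOf {α : Q.V → ℤ} (hα : σ.IsFixed α) (i : Q.V) :
    Q.formQ α (eVec (σ.orbOf i).out) = Q.formQ α (eVec i) :=
  σ.apply_eq_of_sameOrbit (g := fun j => Q.formQ α (eVec j)) (σ.formQ_eVec_vmap hα)
    (σ.orbOf_eq_orbOf.1 (σ.orbOf_out _))

theorem AQ_eq_zero_of_sameOrbit (hadm : σ.Admissible) {i j : Q.V} (hne : i ≠ j)
    (h : σ.SameOrbit i j) : Q.AQ i j = 0 := by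
  rw [FinQuiver.AQ, if_neg hne, neg_eq_zero, Nat.cast_eq_zero, FinQuiver.eQ, Finset.card_eq_zero,
    Finset.filter_eq_empty_iff]
  rintro ρ - (⟨hs, ht⟩ | ⟨hs, ht⟩)
  · exact hadm ρ (hs ▸ ht ▸ h)
  · exact hadm ρ (hs ▸ ht ▸ σ.sameOrbit_equivalence.symm h)

theorem formG_fmap_eVec (hadm : σ.Admissible) {α : Q.V → ℤ} (hα : σ.IsFixed α) (oi : σ.Orb) :
    σ.formG (σ.fmap α) (eVec oi) = σ.d oi * Q.formQ α (eVec oi.out) := by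
  set χ : Q.V → ℤ := fun j => eVec oi (σ.orbOf j)
  have hχ : σ.IsFixed χ := fun j => by simp only [χ, σ.orbOf_vmap]
  have hfχ : σ.fmap χ = eVec oi := funext fun oj => by simp only [χ, fmap, orbOf_out]
  calc σ.formG (σ.fmap α) (eVec oi) = Q.formQ α χ := by
        rw [← hfχ, σ.formQ_eq_formG_fmap hadm hα hχ]
    _ = ∑ j, eVec oi (σ.orbOf j) * Q.formQ α (eVec (σ.orbOf j).out) := by
        simp only [Q.formQ_eq_sum_mul_formQ_eVec α χ, σ.formQ_eVec_out_orbOf hα, χ]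
    _ = ∑ oj, (σ.d oj : ℤ) * (eVec oi oj * Q.formQ α (eVec oj.out)) :=
        σ.sum_comp_orbOf fun oj => eVec oi oj * Q.formQ α (eVec oj.out)
    _ = _ := by simp [eVec]

theorem fmap_foldr_reflQ (hadm : σ.Admissible) {oi : σ.Orb} {l : List Q.V} (hl : l.Nodup)
    (hmem : ∀ i, i ∈ l ↔ σ.orbOf i = oi) {α : Q.V → ℤ} (hα : σ.IsFixed α) :
    σ.fmap (l.foldr Q.reflQ α) = σ.reflG oi (σ.fmap α) := by
  have horth : l.Pairwise fun u v => Q.AQ u v = 0 :=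
    hl.pairwise_of_forall_ne fun u hu v hv huv => σ.AQ_eq_zero_of_sameOrbit hadm huv
      (σ.orbOf_eq_orbOf.1 (((hmem u).1 hu).trans ((hmem v).1 hv).symm))
  have hd : (σ.d oi : ℤ) ≠ 0 := by exact_mod_cast (σ.d_pos oi).ne'
  funext oj
  rw [Q.foldr_reflQ_of_pairwise horth, reflG, σ.formG_fmap_eVec hadm hα,
    Int.mul_ediv_cancel_left _ hd]
  by_cases h : oj = oi
  · subst h; simp [fmap, hmem, orbOf_out, eVec]
  · simp [fmap, hmem, orbOf_out, eVec, h]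

end QuiverAut

/-- `s_𝐢` is realised as `l.foldr Q.reflQ` for a duplicate-free enumeration `l` of the orbit `𝐢`. -/
theorem statement_2 (Q : FinQuiver) (σ : QuiverAut Q) (hadm : σ.Admissible) :
    (∀ α β : Q.V → ℤ, σ.IsFixed α → σ.IsFixed β →
      Q.formQ α β = σ.formG (σ.fmap α) (σ.fmap β)) ∧
    (∀ (oi : σ.Orb) (l : List Q.V), l.Nodup → (∀ i, i ∈ l ↔ σ.orbOf i = oi) →
      ∀ α : Q.V → ℤ, σ.IsFixed α →
        σ.fmap (l.foldr Q.reflQ α) = σ.reflG oi (σ.fmap α)) :=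
  ⟨fun _ _ hα hβ => σ.formQ_eq_formG_fmap hadm hα hβ,
    fun _ _ hl hmem _ hα => σ.fmap_foldr_reflQ hadm hl hmem hα⟩
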